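/- arXiv:2304.01975 — 6 statements merged into one kernel-verified Lean document; each statement's English description precedes it below -/
import Mathlib

section
/- The endemic equilibrium values E* = (μ+ρ)(μ+τ+γ)D/(βεC), I* = (μ+ρ)D/(βC), R* = γD/(βC), where D = hNβε - μ(μ+ε)(μ+τ+γ) and C = (μ+ρ)(μ+ε)(μ+τ+γ) - γερ, together with S* = (μ+ε)(μ+τ+γ)/(βε), satisfy all four equilibrium equations: hN - μS* - βS*I* + ρR* = 0, βS*I* - (μ+ε)E* = 0, εE* - (μ+τ+γ)I* = 0, and γI* - (μ+ρ)R* = 0. -/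
/-! Equations two to four hold after cancelling `β` and `ε`. In the first, the net flux
`β S* I* - ρ R*` out of the susceptible class equals `D / (β ε)`, because its numerator is
`C D` and `C` cancels; then `h N - μ S* = D / (β ε)` is the definition of `D`. -/

lemma infection_sub_return_flux_eq {K : Type*} [Field K] {μ β ρ ε τ γ C : K} (D : K)
    (hβ : β ≠ 0) (hε : ε ≠ 0) (hC : C = (μ + ρ) * (μ + ε) * (μ + τ + γ) - γ * ε * ρ)
    (hC0 : C ≠ 0) :
    β * ((μ + ε) * (μ + τ + γ) / (β * ε)) * ((μ + ρ) * D / (β * C)) - ρ * (γ * D / (β * C)) =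
      D / (β * ε) := by
  field_simp
  rw [hC]
  ring

theorem endemic_equilibrium_satisfies_equations_general
    (h μ β ρ ε τ γ N : ℝ)
    (hβ : 0 < β) (hε : 0 < ε)
    (D C Sstar Estar Istar Rstar : ℝ)
    (hD : D = h * N * β * ε - μ * (μ + ε) * (μ + τ + γ))
    (hC : C = (μ + ρ) * (μ + ε) * (μ + τ + γ) - γ * ε * ρ)
    (hCne : C ≠ 0)
    (hSstar : Sstar = (μ + ε) * (μ + τ + γ) / (β * ε))
    (hEstar : Estar = (μ + ρ) * (μ + τ + γ) * D / (β * ε * C))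
    (hIstar : Istar = (μ + ρ) * D / (β * C))
    (hRstar : Rstar = γ * D / (β * C)) :
    h * N - μ * Sstar - β * Sstar * Istar + ρ * Rstar = 0 ∧
    β * Sstar * Istar - (μ + ε) * Estar = 0 ∧
    ε * Estar - (μ + τ + γ) * Istar = 0 ∧
    γ * Istar - (μ + ρ) * Rstar = 0 := by
  have hβ0 := hβ.ne'
  have hε0 := hε.ne'
  have hflux := infection_sub_return_flux_eq D hβ0 hε0 hC hCne
  subst hSstar hEstar hIstar hRstar
  refine ⟨?_, ?_, ?_, ?_⟩
  · have hsusceptible : h * N - μ * ((μ + ε) * (μ + τ + γ) / (β * ε)) = D / (β * ε) := by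
      rw [hD]
      field_simp
    linear_combination hsusceptible - hflux
  all_goals field_simp; ring

theorem endemic_equilibrium_satisfies_equations
    (h μ β ρ ε τ γ N : ℝ)
    (hh : 0 < h) (hμ : 0 < μ) (hβ : 0 < β) (hρ : 0 < ρ)
    (hε : 0 < ε) (hτ : 0 < τ) (hγ : 0 < γ) (hN : 0 < N)
    (D C Sstar Estar Istar Rstar : ℝ)
    (hD : D = h * N * β * ε - μ * (μ + ε) * (μ + τ + γ))
    (hC : C = (μ + ρ) * (μ + ε) * (μ + τ + γ) - γ * ε * ρ)
    (hCne : C ≠ 0)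
    (hSstar : Sstar = (μ + ε) * (μ + τ + γ) / (β * ε))
    (hEstar : Estar = (μ + ρ) * (μ + τ + γ) * D / (β * ε * C))
    (hIstar : Istar = (μ + ρ) * D / (β * C))
    (hRstar : Rstar = γ * D / (β * C)) :
    h * N - μ * Sstar - β * Sstar * Istar + ρ * Rstar = 0 ∧
    β * Sstar * Istar - (μ + ε) * Estar = 0 ∧
    ε * Estar - (μ + τ + γ) * Istar = 0 ∧
    γ * Istar - (μ + ρ) * Rstar = 0 :=
  endemic_equilibrium_satisfies_equations_general h μ β ρ ε τ γ N hβ hε D C Sstar Estar Istar Rstar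
    hD hC hCne hSstar hEstar hIstar hRstar
end

section
/- Let R₀ = βNhε/(μ(μ+ε)(μ+τ+γ)) and p(z) = z² + (2μ+ε+τ+γ)z + (μ+ε)(μ+τ+γ) - hβεN/μ. If R₀ < 1, then both (possibly complex) roots of p have strictly negative real part. -/
theorem quadratic_complex_roots_negative_real_part
    (h μ β ε τ γ N : ℝ)
    (hh : 0 < h) (hμ : 0 < μ) (hβ : 0 < β)
    (hε : 0 < ε) (hτ : 0 < τ) (hγ : 0 < γ) (hN : 0 < N)
    (hR0 : β * N * h * ε / (μ * (μ + ε) * (μ + τ + γ)) < 1) :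
    ∀ z : ℂ,
      z ^ 2 + (2 * μ + ε + τ + γ : ℝ) * z +
        ((μ + ε) * (μ + τ + γ) - h * β * ε * N / μ : ℝ) = 0 →
      z.re < 0 := by
  intro z hz
  have hbpos : (0:ℝ) < 2 * μ + ε + τ + γ := by positivity
  have hden : 0 < μ * (μ + ε) * (μ + τ + γ) := by positivity
  have hcpos : (0:ℝ) < (μ + ε) * (μ + τ + γ) - h * β * ε * N / μ := by
    have h1 : β * N * h * ε < μ * (μ + ε) * (μ + τ + γ) := by
      rwa [div_lt_one hden] at hR0
    have h2 : h * β * ε * N / μ < (μ + ε) * (μ + τ + γ) := by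
      rw [div_lt_iff₀ hμ]; nlinarith
    linarith
  simp only [Complex.ext_iff, pow_two, Complex.add_re, Complex.add_im,
    Complex.mul_re, Complex.mul_im, Complex.ofReal_re, Complex.ofReal_im,
    Complex.zero_re, Complex.zero_im] at hz
  obtain ⟨hre, him⟩ := hz
  set x := z.re
  set y := z.im
  -- him : 2xy + by = 0  i.e. y*(2x+b)=0
  rcases mul_eq_zero.mp (show y * (2*x + (2 * μ + ε + τ + γ)) = 0 by nlinarith [him]) with hy | hx
  · -- y = 0: x² + bx + c = 0
    by_contra hnx
    push_neg at hnx
    nlinarith [hre, mul_nonneg hnx hnx]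
  · linarith
end

section
/- Let R₀ = βNhε/(μ(μ+ε)(μ+τ+γ)) and p(z) = z² + (2μ+ε+τ+γ)z + (μ+ε)(μ+τ+γ) - hβεN/μ. If R₀ > 1, then p has a strictly positive real root. -/
theorem quadratic_positive_root
    (h μ β ε τ γ N : ℝ)
    (hh : 0 < h) (hμ : 0 < μ) (hβ : 0 < β)
    (hε : 0 < ε) (hτ : 0 < τ) (hγ : 0 < γ) (hN : 0 < N)
    (hR0 : β * N * h * ε / (μ * (μ + ε) * (μ + τ + γ)) > 1) :
    ∃ z : ℝ, 0 < z ∧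
      z ^ 2 + (2 * μ + ε + τ + γ) * z + (μ + ε) * (μ + τ + γ) - h * β * ε * N / μ = 0 := by
  set b : ℝ := 2 * μ + ε + τ + γ with hb
  set c : ℝ := (μ + ε) * (μ + τ + γ) - h * β * ε * N / μ with hc
  have hden : 0 < μ * (μ + ε) * (μ + τ + γ) := by positivity
  have hkey : μ * (μ + ε) * (μ + τ + γ) < β * N * h * ε := by
    have := (lt_div_iff₀ hden).mp hR0
    linarith
  have hcneg : c < 0 := by
    rw [hc, sub_neg, lt_div_iff₀ hμ]
    nlinarith
  have hbpos : 0 < b := by rw [hb]; linarith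
  have hD : (0:ℝ) ≤ b ^ 2 - 4 * c := by nlinarith
  set s : ℝ := Real.sqrt (b ^ 2 - 4 * c) with hs
  have hs2 : s ^ 2 = b ^ 2 - 4 * c := Real.sq_sqrt hD
  have hsb : b < s := by
    nlinarith [Real.sqrt_nonneg (b ^ 2 - 4 * c)]
  refine ⟨(-b + s) / 2, by linarith, ?_⟩
  have hz : ((-b + s) / 2) ^ 2 + b * ((-b + s) / 2) + c = 0 := by
    linear_combination hs2 / 4
  linarith [hz, hc]
end

section
/- If R₀ < 1 where R₀ = βNhε/(μ(μ+ε)(μ+τ+γ)), then all eigenvalues of the 4×4 matrix J(E₀) = [[-μ, 0, -βhN/μ, ρ],[0, -(μ+ε), βhN/μ, 0],[0, ε, -(μ+τ+γ), 0],[0, 0, γ, -(μ+ρ)]] have strictly negative real part. -/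
open Matrix Polynomial

lemma eval_charpoly' {n : Type*} [Fintype n] [DecidableEq n] (M : Matrix n n ℂ) (z : ℂ) :
    M.charpoly.eval z = (z • (1 : Matrix n n ℂ) - M).det := by
  rw [Matrix.charpoly, ← Polynomial.coe_evalRingHom, RingHom.map_det]
  congr 1
  ext i j
  by_cases hij : i = j
  · subst hij; simp [charmatrix_apply_eq, Matrix.one_apply]
  · simp [charmatrix_apply_ne _ _ _ hij, Matrix.one_apply, hij]

set_option maxHeartbeats 1000000 in
lemma det_fin_four' (M : Matrix (Fin 4) (Fin 4) ℂ) :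
    M.det =
      M 0 0 * M 1 1 * M 2 2 * M 3 3 - M 0 0 * M 1 1 * M 2 3 * M 3 2 -
        M 0 0 * M 1 2 * M 2 1 * M 3 3 + M 0 0 * M 1 2 * M 2 3 * M 3 1 +
        M 0 0 * M 1 3 * M 2 1 * M 3 2 - M 0 0 * M 1 3 * M 2 2 * M 3 1 -
        M 0 1 * M 1 0 * M 2 2 * M 3 3 + M 0 1 * M 1 0 * M 2 3 * M 3 2 +
        M 0 1 * M 1 2 * M 2 0 * M 3 3 - M 0 1 * M 1 2 * M 2 3 * M 3 0 -
        M 0 1 * M 1 3 * M 2 0 * M 3 2 + M 0 1 * M 1 3 * M 2 2 * M 3 0 +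
        M 0 2 * M 1 0 * M 2 1 * M 3 3 - M 0 2 * M 1 0 * M 2 3 * M 3 1 -
        M 0 2 * M 1 1 * M 2 0 * M 3 3 + M 0 2 * M 1 1 * M 2 3 * M 3 0 +
        M 0 2 * M 1 3 * M 2 0 * M 3 1 - M 0 2 * M 1 3 * M 2 1 * M 3 0 -
        M 0 3 * M 1 0 * M 2 1 * M 3 2 + M 0 3 * M 1 0 * M 2 2 * M 3 1 +
        M 0 3 * M 1 1 * M 2 0 * M 3 2 - M 0 3 * M 1 1 * M 2 2 * M 3 0 -
        M 0 3 * M 1 2 * M 2 0 * M 3 1 + M 0 3 * M 1 2 * M 2 1 * M 3 0 := by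
  simp [Matrix.det_succ_row_zero, Fin.sum_univ_succ, Fin.succAbove, Matrix.submatrix,
    show (Fin.succ 2 : Fin 4) = 3 from rfl, show (Fin.castSucc 2 : Fin 4) = 2 from rfl,
    show (Fin.castSucc 1 : Fin 4) = 1 from rfl, show (Fin.castSucc 0 : Fin 4) = 0 from rfl]
  ring

lemma quad_root_neg_re (b c : ℝ) (hb : 0 < b) (hc : 0 < c) (z : ℂ)
    (hz : z ^ 2 + (b : ℂ) * z + (c : ℂ) = 0) : z.re < 0 := by
  by_contra hx
  push_neg at hx
  have hre : (z ^ 2 + (b : ℂ) * z + (c : ℂ)).re = 0 := by rw [hz]; simp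
  have him : (z ^ 2 + (b : ℂ) * z + (c : ℂ)).im = 0 := by rw [hz]; simp
  simp [pow_two, Complex.add_re, Complex.add_im, Complex.mul_re, Complex.mul_im] at hre him
  have him2 : z.im ^ 2 * (2 * z.re + b) = 0 := by nlinarith [him]
  have hy : z.im ^ 2 = 0 := by
    rcases mul_eq_zero.mp him2 with h | h
    · exact h
    · nlinarith
  nlinarith [sq_nonneg z.re]

open Matrix in
theorem jacobian_dfe_eigenvalues_negative_real_part
    (h μ β ρ ε τ γ N : ℝ)
    (hh : 0 < h) (hμ : 0 < μ) (hβ : 0 < β) (hρ : 0 < ρ)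
    (hε : 0 < ε) (hτ : 0 < τ) (hγ : 0 < γ) (hN : 0 < N)
    (hR0 : β * N * h * ε / (μ * (μ + ε) * (μ + τ + γ)) < 1)
    (J : Matrix (Fin 4) (Fin 4) ℝ)
    (hJ : J = !![-μ, 0, -(β * h * N / μ), ρ;
                 0, -(μ + ε), β * h * N / μ, 0;
                 0, ε, -(μ + τ + γ), 0;
                 0, 0, γ, -(μ + ρ)]) :
    ∀ z : ℂ, (J.map (Complex.ofReal)).charpoly.IsRoot z → z.re < 0 := by
  subst hJ
  intro z hz
  rw [Polynomial.IsRoot, eval_charpoly'] at hz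
  have hM : z • (1 : Matrix (Fin 4) (Fin 4) ℂ) -
      (!![-μ, 0, -(β * h * N / μ), ρ; 0, -(μ + ε), β * h * N / μ, 0;
          0, ε, -(μ + τ + γ), 0; 0, 0, γ, -(μ + ρ)]).map Complex.ofReal =
      !![z + μ, 0, ((β * h * N / μ : ℝ) : ℂ), -((ρ:ℝ) : ℂ);
         0, z + ((μ:ℂ) + ε), -((β * h * N / μ : ℝ) : ℂ), 0;
         0, -((ε:ℝ) : ℂ), z + ((μ:ℂ) + τ + γ), 0;
         0, 0, -((γ:ℝ) : ℂ), z + ((μ:ℂ) + ρ)] := by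
    ext i j
    fin_cases i <;> fin_cases j <;>
      simp [Matrix.one_apply, Matrix.vecHead, Matrix.vecTail] <;> push_cast <;> ring
  rw [hM, det_fin_four'] at hz
  norm_num [Matrix.vecHead, Matrix.vecTail] at hz
  push_cast at hz
  have key : (z + (μ:ℂ)) * ((z + ((μ:ℂ) + ρ)) *
      ((z + ((μ:ℂ) + ε)) * (z + ((μ:ℂ) + τ + γ)) - (β:ℂ) * h * N / μ * ε)) = 0 := by
    linear_combination hz
  rcases mul_eq_zero.mp key with h1 | h2
  · have : z = -(μ:ℂ) := by linear_combination h1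
    rw [this]
    simpa using hμ
  rcases mul_eq_zero.mp h2 with h3 | h4
  · have : z = -(((μ + ρ : ℝ)) : ℂ) := by push_cast; linear_combination h3
    rw [this]
    simp only [Complex.neg_re, Complex.ofReal_re, neg_neg, Left.neg_neg_iff]
    positivity
  · have hd : 0 < μ * (μ + ε) * (μ + τ + γ) := by positivity
    have hlt : β * N * h * ε < μ * (μ + ε) * (μ + τ + γ) := (div_lt_one hd).mp hR0
    have hc : 0 < (μ + ε) * (μ + τ + γ) - β * h * N / μ * ε := by
      rw [sub_pos, div_mul_eq_mul_div, div_lt_iff₀ hμ]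
      nlinarith
    apply quad_root_neg_re (2 * μ + ε + τ + γ)
      ((μ + ε) * (μ + τ + γ) - β * h * N / μ * ε) (by positivity) hc z
    push_cast
    linear_combination h4
end

section
/- Suppose h > μ and S ≤ Nh/μ, I ≥ 0, R ≥ 0. With A = εβN(h−μ)/(γμ) and R₀ = βNhε/(μ(μ+ε)(μ+τ+γ)), the expression ε(βSI − (μ+ε)E) + (μ+ε)(εE − (μ+τ+γ)I) + A(γI − (μ+ρ)R) is at most (μ+ε)(μ+τ+γ)(R₀ − 1)I + AγI, hence is ≤ 0 whenever the combined coefficient εβS − (μ+ε)(μ+τ+γ) + Aγ ≤ 0. -/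
theorem lyapunov_derivative_R0_bound
    (h μ β ρ ε τ γ N : ℝ)
    (hh : 0 < h) (hμ : 0 < μ) (hβ : 0 < β) (hρ : 0 < ρ)
    (hε : 0 < ε) (hτ : 0 < τ) (hγ : 0 < γ) (hN : 0 < N)
    (hhμ : h > μ)
    (A R0 : ℝ)
    (hA : A = ε * β * N * (h - μ) / (γ * μ))
    (hR0 : R0 = β * N * h * ε / (μ * (μ + ε) * (μ + τ + γ)))
    (S E I R : ℝ) (hS : S ≤ N * h / μ) (hI : 0 ≤ I) (hR : 0 ≤ R) :
    ε * (β * S * I - (μ + ε) * E) + (μ + ε) * (ε * E - (μ + τ + γ) * I) +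
        A * (γ * I - (μ + ρ) * R) ≤
      (μ + ε) * (μ + τ + γ) * (R0 - 1) * I + A * γ * I ∧
    (ε * β * S - (μ + ε) * (μ + τ + γ) + A * γ ≤ 0 →
      ε * (β * S * I - (μ + ε) * E) + (μ + ε) * (ε * E - (μ + τ + γ) * I) +
          A * (γ * I - (μ + ρ) * R) ≤ 0) := by
  have hA0 : 0 ≤ A := by
    rw [hA]
    apply div_nonneg _ (by positivity)
    nlinarith [mul_pos (mul_pos hε hβ) hN]
  have hμε : 0 < μ + ε := by linarith
  have hμτγ : 0 < μ + τ + γ := by linarith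
  have hRe : R0 * (μ * (μ + ε) * (μ + τ + γ)) = β * N * h * ε := by
    rw [hR0]; field_simp
  constructor
  · have key : ε * β * S * I ≤ (μ + ε) * (μ + τ + γ) * R0 * I := by
      have h1 : ε * β * S ≤ (μ + ε) * (μ + τ + γ) * R0 := by
        have h2 : S * μ ≤ N * h := (le_div_iff₀ hμ).mp hS
        nlinarith [hS, mul_pos hβ hε]
      nlinarith
    nlinarith [mul_nonneg hA0 hR, mul_pos hμ hρ, mul_nonneg (mul_nonneg hA0 hR) (le_of_lt (by linarith : (0:ℝ) < μ + ρ))]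
  · intro hc
    have h1 : (ε * β * S - (μ + ε) * (μ + τ + γ) + A * γ) * I ≤ 0 :=
      mul_nonpos_of_nonpos_of_nonneg hc hI
    nlinarith [mul_nonneg hA0 hR, mul_nonneg (mul_nonneg hA0 hR) (le_of_lt (by linarith : (0:ℝ) < μ + ρ))]
end

section
/- Suppose (S,E,I,R) : [0,∞) → ℝ⁴ is a differentiable solution of the SEIR system dS/dt = hN − μS − βSI + ρR, dE/dt = βSI − (μ+ε)E, dI/dt = εE − (μ+τ+γ)I, dR/dt = γI − (μ+ρ)R with N > 0 constant and all initial values positive. Then S(t), E(t), I(t), R(t) remain strictly positive for all t ≥ 0. -/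
/-!
Each equation of the SEIR system reads `x' = inflow - c x`, where the inflow is nonnegative as
long as the other compartments are, and the loss rate `c` is constant except for `S`, where it is
`μ + β I` and hence bounded on compact time intervals. Then `x e^{ct}` is nondecreasing, so `x`
cannot reach `0`. Hence at the first time some compartment would vanish, all four are still
positive, a contradiction.
-/

open Set Real

lemma pos_of_neg_mul_le_deriv {f f' : ℝ → ℝ} {a b c : ℝ} (hab : a ≤ b)
    (hf : ContinuousOn f (Icc a b)) (hd : ∀ t ∈ Ioo a b, HasDerivAt f (f' t) t)
    (hle : ∀ t ∈ Ioo a b, -(c * f t) ≤ f' t) (ha : 0 < f a) : 0 < f b := by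
  set g : ℝ → ℝ := fun t => f t * exp (c * t)
  have hg : ∀ t ∈ Ioo a b, HasDerivAt g ((f' t + c * f t) * exp (c * t)) t := fun t ht => by
    have hexp : HasDerivAt (fun t => exp (c * t)) (exp (c * t) * c) t :=
      ((hasDerivAt_id t).const_mul c).exp.congr_deriv (by simp)
    exact ((hd t ht).mul hexp).congr_deriv (by ring)
  have hmono : MonotoneOn g (Icc a b) := by
    refine monotoneOn_of_hasDerivWithinAt_nonneg (f' := fun t => (f' t + c * f t) * exp (c * t))
      (convex_Icc a b) (hf.mul (by fun_prop)) (fun t ht => ?_) (fun t ht => ?_)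
    · rw [interior_Icc] at ht ⊢
      exact (hg t ht).hasDerivWithinAt
    · rw [interior_Icc] at ht
      exact mul_nonneg (by linarith [hle t ht]) (exp_pos _).le
  have hgab : g a ≤ g b := hmono (left_mem_Icc.2 hab) (right_mem_Icc.2 hab) hab
  exact pos_of_mul_pos_left ((by positivity : 0 < g a).trans_le hgab) (exp_pos _).le

lemma pos_of_forall_Ico_pos {f : ℝ → ℝ} {a : ℝ} (hf : ContinuousOn f (Ici a)) (ha : 0 < f a)
    (hstep : ∀ T > a, (∀ t ∈ Ico a T, 0 < f t) → 0 < f T) : ∀ t ≥ a, 0 < f t := by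
  by_contra! hneg
  obtain ⟨t₀, ht₀, hft₀⟩ := hneg
  set B := Ici a ∩ f ⁻¹' Iic 0
  have hBbdd : BddBelow B := ⟨a, fun t ht => ht.1⟩
  have hTB : sInf B ∈ B :=
    (hf.preimage_isClosed_of_isClosed isClosed_Ici isClosed_Iic).csInf_mem ⟨t₀, ht₀, hft₀⟩ hBbdd
  have haT : a < sInf B := hTB.1.lt_of_ne fun haT => (haT ▸ hTB.2 : f a ≤ 0).not_gt ha
  have hbefore : ∀ t ∈ Ico a (sInf B), 0 < f t := fun t ht =>
    not_le.1 fun hft => (csInf_le hBbdd ⟨ht.1, hft⟩).not_gt ht.2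
  exact (hstep _ haT hbefore).not_ge hTB.2

lemma seir_pos_of_pos_on_Ico {h μ β ρ ε τ γ N : ℝ} {S E I R : ℝ → ℝ}
    (hhN : 0 ≤ h * N) (hβ : 0 ≤ β) (hρ : 0 ≤ ρ) (hε : 0 ≤ ε) (hγ : 0 ≤ γ)
    (hS : ∀ t ≥ (0 : ℝ), HasDerivAt S (h * N - μ * S t - β * S t * I t + ρ * R t) t)
    (hE : ∀ t ≥ (0 : ℝ), HasDerivAt E (β * S t * I t - (μ + ε) * E t) t)
    (hI : ∀ t ≥ (0 : ℝ), HasDerivAt I (ε * E t - (μ + τ + γ) * I t) t)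
    (hR : ∀ t ≥ (0 : ℝ), HasDerivAt R (γ * I t - (μ + ρ) * R t) t)
    {T : ℝ} (hT : 0 < T) (hpos : ∀ t ∈ Ico 0 T, 0 < S t ∧ 0 < E t ∧ 0 < I t ∧ 0 < R t) :
    0 < S T ∧ 0 < E T ∧ 0 < I T ∧ 0 < R T := by
  have hcont {x x' : ℝ → ℝ} (hx : ∀ t ≥ (0 : ℝ), HasDerivAt x (x' t) t) :
      ContinuousOn x (Icc 0 T) :=
    continuousOn_of_forall_continuousAt fun t ht => (hx t ht.1).continuousAt
  have hcomp {x x' : ℝ → ℝ} (c : ℝ) (hx : ∀ t ≥ (0 : ℝ), HasDerivAt x (x' t) t)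
      (hle : ∀ t ∈ Ioo 0 T, -(c * x t) ≤ x' t) (hx0 : 0 < x 0) : 0 < x T :=
    pos_of_neg_mul_le_deriv hT.le (hcont hx) (fun t ht => hx t ht.1.le) hle hx0
  have hnonneg : ∀ t ∈ Ioo 0 T, 0 ≤ S t ∧ 0 ≤ E t ∧ 0 ≤ I t ∧ 0 ≤ R t := fun t ht =>
    have ⟨hSt, hEt, hIt, hRt⟩ := hpos t (Ioo_subset_Ico_self ht)
    ⟨hSt.le, hEt.le, hIt.le, hRt.le⟩
  obtain ⟨hS0, hE0, hI0, hR0⟩ := hpos 0 (left_mem_Ico.2 hT)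
  obtain ⟨C, hC⟩ := isCompact_Icc.exists_bound_of_continuousOn (hcont hI)
  refine ⟨hcomp (μ + β * C) hS (fun t ht => ?_) hS0, hcomp (μ + ε) hE (fun t ht => ?_) hE0,
    hcomp (μ + τ + γ) hI (fun t ht => ?_) hI0, hcomp (μ + ρ) hR (fun t ht => ?_) hR0⟩ <;>
    obtain ⟨hSt, hEt, hIt, hRt⟩ := hnonneg t ht
  · have hIC : I t ≤ C := (le_abs_self _).trans (hC t (Ioo_subset_Icc_self ht))
    have : β * S t * I t ≤ β * S t * C := mul_le_mul_of_nonneg_left hIC (by positivity)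
    linarith [mul_nonneg hρ hRt]
  · linarith [mul_nonneg (mul_nonneg hβ hSt) hIt]
  · linarith [mul_nonneg hε hEt]
  · linarith [mul_nonneg hγ hIt]

theorem seir_solutions_positive_general
    (h μ β ρ ε τ γ N : ℝ)
    (hh : 0 < h) (hβ : 0 < β) (hρ : 0 < ρ)
    (hε : 0 < ε) (hγ : 0 < γ) (hN : 0 < N)
    (S E I R : ℝ → ℝ)
    (hS : ∀ t ≥ (0 : ℝ), HasDerivAt S (h * N - μ * S t - β * S t * I t + ρ * R t) t)
    (hE : ∀ t ≥ (0 : ℝ), HasDerivAt E (β * S t * I t - (μ + ε) * E t) t)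
    (hI : ∀ t ≥ (0 : ℝ), HasDerivAt I (ε * E t - (μ + τ + γ) * I t) t)
    (hR : ∀ t ≥ (0 : ℝ), HasDerivAt R (γ * I t - (μ + ρ) * R t) t)
    (hS0 : 0 < S 0) (hE0 : 0 < E 0) (hI0 : 0 < I 0) (hR0 : 0 < R 0) :
    ∀ t ≥ (0 : ℝ), 0 < S t ∧ 0 < E t ∧ 0 < I t ∧ 0 < R t := by
  set m : ℝ → ℝ := fun t => min (min (S t) (E t)) (min (I t) (R t))
  have hm (t : ℝ) : 0 < m t ↔ 0 < S t ∧ 0 < E t ∧ 0 < I t ∧ 0 < R t := by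
    simp only [m, lt_min_iff, and_assoc]
  have hcont {x x' : ℝ → ℝ} (hx : ∀ t ≥ (0 : ℝ), HasDerivAt x (x' t) t) :
      ContinuousOn x (Ici 0) :=
    continuousOn_of_forall_continuousAt fun t ht => (hx t ht).continuousAt
  have hmc : ContinuousOn m (Ici 0) :=
    ((hcont hS).inf (hcont hE)).inf ((hcont hI).inf (hcont hR))
  intro t ht
  refine (hm t).1 (pos_of_forall_Ico_pos hmc ((hm 0).2 ⟨hS0, hE0, hI0, hR0⟩) ?_ t ht)
  exact fun T hT hpos => (hm T).2 <| seir_pos_of_pos_on_Ico (mul_pos hh hN).le hβ.le hρ.le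
    hε.le hγ.le hS hE hI hR hT fun u hu => (hm u).1 (hpos u hu)

theorem seir_solutions_positive
    (h μ β ρ ε τ γ N : ℝ)
    (hh : 0 < h) (hμ : 0 < μ) (hβ : 0 < β) (hρ : 0 < ρ)
    (hε : 0 < ε) (hτ : 0 < τ) (hγ : 0 < γ) (hN : 0 < N)
    (S E I R : ℝ → ℝ)
    (hS : ∀ t ≥ (0 : ℝ), HasDerivAt S (h * N - μ * S t - β * S t * I t + ρ * R t) t)
    (hE : ∀ t ≥ (0 : ℝ), HasDerivAt E (β * S t * I t - (μ + ε) * E t) t)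
    (hI : ∀ t ≥ (0 : ℝ), HasDerivAt I (ε * E t - (μ + τ + γ) * I t) t)
    (hR : ∀ t ≥ (0 : ℝ), HasDerivAt R (γ * I t - (μ + ρ) * R t) t)
    (hS0 : 0 < S 0) (hE0 : 0 < E 0) (hI0 : 0 < I 0) (hR0 : 0 < R 0) :
    ∀ t ≥ (0 : ℝ), 0 < S t ∧ 0 < E t ∧ 0 < I t ∧ 0 < R t :=
  seir_solutions_positive_general h μ β ρ ε τ γ N hh hβ hρ hε hγ hN S E I R hS hE hI hR hS0 hE0 hI0
    hR0
end
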